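/- arXiv:1703.06665 — 2 statements merged into one kernel-verified Lean document; each statement's English description precedes it below -/
import Mathlib

section
/- Let t ≥ 2 be an integer and let r, n be integers with r ≥ 2, n ≥ r, and with r ≥ 3 or n ≥ 3. Suppose r_1, …, r_t are positive integers and n_1, …, n_t are integers satisfying Σ_{i=1}^t r_i = r, Σ_{i=1}^t n_i = n, and r_i·n = r·n_i for every i. Then Σ_{(i,j): i ≠ j} r_i·(2·n_j − r_j) − t ≥ 2. -/
/-- Key combinatorial inequality from Lemma 2.5: if `t ≥ 2`, `r ≥ 2`, `n ≥ r`,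
`r ≥ 3` or `n ≥ 3`, the `r i` are positive integers summing to `r`, the `n i`
are integers summing to `n`, and `r i * n = r * n i` for all `i`, then
`∑_{i ≠ j} r i * (2 * n j - r j) - t ≥ 2`. -/
theorem stmt_1 (t : ℕ) (ht : 2 ≤ t) (r n : ℤ) (hr : 2 ≤ r) (hn : r ≤ n)
    (h3 : 3 ≤ r ∨ 3 ≤ n)
    (ri : Fin t → ℤ) (hri : ∀ i, 0 < ri i) (ni : Fin t → ℤ)
    (hsumr : ∑ i, ri i = r) (hsumn : ∑ i, ni i = n)
    (hprop : ∀ i, ri i * n = r * ni i) :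
    (∑ p ∈ Finset.univ.filter (fun p : Fin t × Fin t => p.1 ≠ p.2),
        ri p.1 * (2 * ni p.2 - ri p.2)) - (t : ℤ) ≥ 2 := by
  classical
  have hn3 : 3 ≤ n := by rcases h3 with h | h <;> linarith
  set D := (Finset.univ.filter (fun p : Fin t × Fin t => p.1 ≠ p.2)) with hD
  set S := ∑ p ∈ D, ri p.1 * (2 * ni p.2 - ri p.2) with hS
  set A := ∑ p ∈ D, ri p.1 * ri p.2 with hA
  -- key identity: r * S = (2n - r) * A
  have hkey : r * S = (2 * n - r) * A := by
    rw [hS, hA, Finset.mul_sum, Finset.mul_sum]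
    refine Finset.sum_congr rfl (fun p _ => ?_)
    linear_combination (-2 * ri p.1) * (hprop p.2)
  -- upper bound on each ri
  have hub : ∀ i, ri i ≤ r - 1 := by
    intro i
    obtain ⟨j, hj⟩ := Fintype.exists_ne_of_one_lt_card
      (by simp only [Fintype.card_fin]; omega) i
    have h2 : ri i + ri j ≤ ∑ k, ri k := by
      rw [← Finset.sum_pair (Ne.symm hj)]
      exact Finset.sum_le_sum_of_subset_of_nonneg (Finset.subset_univ _)
        (fun k _ _ => (hri k).le)
    rw [hsumr] at h2
    have := hri j
    linarith
  -- A = r*r - ∑ ri i * ri i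
  have hAeq : A = r * r - ∑ i, ri i * ri i := by
    have htot : ∑ p : Fin t × Fin t, ri p.1 * ri p.2 = r * r := by
      rw [Fintype.sum_prod_type, ← Finset.sum_mul_sum, hsumr]
    have hdiag : ∑ p ∈ Finset.univ.filter (fun p : Fin t × Fin t => p.1 = p.2),
        ri p.1 * ri p.2 = ∑ i, ri i * ri i := by
      rw [Finset.sum_filter, Fintype.sum_prod_type]
      simp
    have hsplit := Finset.sum_filter_add_sum_filter_not Finset.univ
      (fun p : Fin t × Fin t => p.1 ≠ p.2) (fun p => ri p.1 * ri p.2)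
    simp only [not_ne_iff] at hsplit
    rw [hdiag, htot] at hsplit
    rw [hA, hD]
    linarith
  -- lower bound on A
  have hAlb : (t : ℤ) * (r - 1) ≤ A := by
    rw [hAeq]
    have h2 : ∑ i, ri i * ri i ≤ ∑ i : Fin t, (ri i * r - (r - 1)) :=
      Finset.sum_le_sum fun i _ => by nlinarith [hri i, hub i]
    rw [Finset.sum_sub_distrib, ← Finset.sum_mul, hsumr, Finset.sum_const,
      Finset.card_univ, Fintype.card_fin, nsmul_eq_mul] at h2
    linarith
  -- final arithmetic
  have ht' : (2 : ℤ) ≤ (t : ℤ) := by exact_mod_cast ht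
  have hmul : (2 * n - r) * ((t : ℤ) * (r - 1)) ≤ (2 * n - r) * A :=
    mul_le_mul_of_nonneg_left hAlb (by linarith)
  have hgoal : r * ((t : ℤ) + 2) ≤ r * S := by
    rw [hkey]
    nlinarith [mul_nonneg (sub_nonneg.mpr ht') (sub_nonneg.mpr hr),
      mul_nonneg (sub_nonneg.mpr ht') (by linarith : (0:ℤ) ≤ n - 3),
      mul_nonneg (by linarith : (0:ℤ) ≤ r - 2) (by linarith : (0:ℤ) ≤ n - r)]
  have hS' : (t : ℤ) + 2 ≤ S := le_of_mul_le_mul_left hgoal (by linarith)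
  linarith
end

section
/- Let t ≥ 2 be an integer. For each i = 1, …, t let r_i be a positive integer, s_i a rational number with s_i ≤ −2, and d_i a rational number satisfying r_i − 2·d_i ≤ (1 + s_i)/r_i. Set r = Σ_{i=1}^t r_i and n = Σ_{i=1}^t d_i. Then Σ_{i=1}^t (1 + s_i − r_i² + 2·r_i·d_i) ≤ 2·r·n − r² − 4. -/
/-- Arithmetic content of inequalities (2.6)–(2.7) in Lemma 2.5: if `t ≥ 2`,
the `r i` are positive integers, `s i ≤ -2`, and
`r i - 2 * d i ≤ (1 + s i) / r i`, then with `r = ∑ r i` and `n = ∑ d i` one has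
`∑ (1 + s i - (r i)^2 + 2 * r i * d i) ≤ 2 * r * n - r^2 - 4`. -/
theorem stmt_2 (t : ℕ) (ht : 2 ≤ t) (r : Fin t → ℤ) (hr : ∀ i, 0 < r i)
    (s d : Fin t → ℚ) (hs : ∀ i, s i ≤ -2)
    (hd : ∀ i, (r i : ℚ) - 2 * d i ≤ (1 + s i) / (r i : ℚ)) :
    (∑ i, (1 + s i - (r i : ℚ) ^ 2 + 2 * (r i : ℚ) * d i))
      ≤ 2 * (∑ i, (r i : ℚ)) * (∑ i, d i) - (∑ i, (r i : ℚ)) ^ 2 - 4 := by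
  have hrq : ∀ i, (0:ℚ) < (r i : ℚ) := fun i => by exact_mod_cast hr i
  set R : ℚ := ∑ i, (r i : ℚ) with hR
  -- AM-GM step: ∑ R / r j ≥ t^2 ≥ 4
  have hAM : (4:ℚ) ≤ ∑ j, R / (r j : ℚ) := by
    have hsum : ∑ j, R / (r j:ℚ) = ∑ j, ∑ i, (r i:ℚ)/(r j:ℚ) := by
      refine Finset.sum_congr rfl fun j _ => ?_
      rw [hR, Finset.sum_div]
    have hswap : ∑ j, ∑ i, ((r i:ℚ)/(r j:ℚ)) = ∑ j, ∑ i, ((r j:ℚ)/(r i:ℚ)) :=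
      Finset.sum_comm
    have hbig : (t:ℚ) * (t:ℚ) * 2 ≤ ∑ j, ∑ i, ((r i:ℚ)/(r j:ℚ) + (r j:ℚ)/(r i:ℚ)) := by
      have h2 : ∀ j ∈ (Finset.univ : Finset (Fin t)),
          (t:ℚ) * 2 ≤ ∑ i, ((r i:ℚ)/(r j:ℚ) + (r j:ℚ)/(r i:ℚ)) := by
        intro j _
        have h3 : ∀ i ∈ (Finset.univ : Finset (Fin t)),
            (2:ℚ) ≤ (r i:ℚ)/(r j:ℚ) + (r j:ℚ)/(r i:ℚ) := by
          intro i _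
          have hi := hrq i; have hj := hrq j
          rw [div_add_div _ _ (ne_of_gt hj) (ne_of_gt hi), le_div_iff₀ (by positivity)]
          nlinarith [sq_nonneg ((r i:ℚ) - (r j:ℚ))]
        calc (t:ℚ) * 2 = ∑ _i : Fin t, (2:ℚ) := by
              simp [Finset.card_univ, mul_comm]
          _ ≤ _ := Finset.sum_le_sum h3
      calc (t:ℚ) * (t:ℚ) * 2 = ∑ _j : Fin t, (t:ℚ) * 2 := by
            simp [Finset.card_univ]; ring
        _ ≤ _ := Finset.sum_le_sum h2
    have hsplit : ∑ j, ∑ i, ((r i:ℚ)/(r j:ℚ) + (r j:ℚ)/(r i:ℚ))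
        = (∑ j, ∑ i, (r i:ℚ)/(r j:ℚ)) + ∑ j, ∑ i, (r j:ℚ)/(r i:ℚ) := by
      rw [← Finset.sum_add_distrib]
      exact Finset.sum_congr rfl fun j _ => by rw [← Finset.sum_add_distrib]
    have ht2 : (2:ℚ) ≤ (t:ℚ) := by exact_mod_cast ht
    rw [hsum]
    nlinarith [hbig, hsplit, hswap, ht2]
  -- termwise inequality
  have hterm : ∀ j ∈ (Finset.univ : Finset (Fin t)),
      R / (r j:ℚ) ≤ (R - (r j:ℚ)) * (2 * d j - (r j:ℚ)) - (1 + s j) := by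
    intro j _
    have hrj : (0:ℚ) < (r j:ℚ) := hrq j
    have hRr : (r j:ℚ) ≤ R :=
      Finset.single_le_sum (fun i _ => (hrq i).le) (Finset.mem_univ j)
    have hq : (1:ℚ) ≤ -(1 + s j) := by linarith [hs j]
    have he : ((r j:ℚ) - 2 * d j) * (r j:ℚ) ≤ 1 + s j :=
      (le_div_iff₀ hrj).mp (hd j)
    rw [div_le_iff₀ hrj]
    nlinarith [mul_nonneg (sub_nonneg.2 hRr) (by nlinarith :
      (0:ℚ) ≤ (r j:ℚ) * (2 * d j - (r j:ℚ)) + (1 + s j)), he, hq, hRr, hrj]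
  have hS : (4:ℚ) ≤ ∑ j, ((R - (r j:ℚ)) * (2 * d j - (r j:ℚ)) - (1 + s j)) :=
    le_trans hAM (Finset.sum_le_sum hterm)
  have hexpand : 2 * R * (∑ i, d i) - R ^ 2
      - (∑ i, (1 + s i - (r i:ℚ) ^ 2 + 2 * (r i:ℚ) * d i))
      = ∑ j, ((R - (r j:ℚ)) * (2 * d j - (r j:ℚ)) - (1 + s j)) := by
    have h2 : 2 * R * (∑ i, d i) = ∑ i, 2 * R * d i := by rw [Finset.mul_sum]
    have h3 : R ^ 2 = ∑ i, R * (r i:ℚ) := by rw [sq, hR, Finset.mul_sum]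
    rw [h2, h3, ← Finset.sum_sub_distrib, ← Finset.sum_sub_distrib]
    exact Finset.sum_congr rfl fun j _ => by ring
  linarith [hS, hexpand]
end
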